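/- arXiv:0912.0372 — 3 statements merged into one kernel-verified Lean document; each statement's English description precedes it below -/
import Mathlib

section
/- Suppose the space G_T(Θ) = {∫_0^T v dS : v ∈ Θ} of attainable gains is a closed linear subspace of L²(P) and the constant 1 does not belong to G_T(Θ). Let f be the orthogonal projection of 1 onto G_T(Θ). Then D̃ := (1−f)/(1−E[f]) is well-defined (E[f] ≠ 1), E[D̃] = 1, and E[D̃ · G_T(v)] = 0 for all v ∈ Θ; thus the signed measure dP̃ = D̃ dP is a signed Θ-martingale measure. -/
/-!
If `E[f] = 1`, the orthogonality `(1 - f) ⊥ f` gives `E[(1 - f)²] = E[1 - f] - E[(1 - f) f] = 0`,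
so `f = 1` a.e., which is excluded since `f ∈ G`. Hence `1 - E[f] ≠ 0`, and normalising `1 - f`
by it preserves its orthogonality to `G` while making its expectation `1`.
-/

open MeasureTheory

section

variable {Ω : Type*} [MeasurableSpace Ω] {μ : Measure Ω} [IsProbabilityMeasure μ]

theorem integral_one_sub_sq_of_integral_one_sub_mul_self {f : Ω → ℝ} (hf : MemLp f 2 μ)
    (horth : ∫ ω, (1 - f ω) * f ω ∂μ = 0) :
    ∫ ω, (1 - f ω) ^ 2 ∂μ = 1 - ∫ ω, f ω ∂μ := by
  have hf1 : Integrable f μ := hf.integrable one_le_two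
  have h1f : Integrable (fun ω => 1 - f ω) μ := (integrable_const 1).sub hf1
  have hg : Integrable (fun ω => (1 - f ω) * f ω) μ := ((memLp_const 1).sub hf).integrable_mul hf
  calc ∫ ω, (1 - f ω) ^ 2 ∂μ = ∫ ω, (1 - f ω) - (1 - f ω) * f ω ∂μ := by
        congr 1; funext ω; ring
    _ = 1 - ∫ ω, f ω ∂μ := by
        rw [integral_sub h1f hg, horth, integral_sub (integrable_const 1) hf1]
        simp

theorem ae_eq_one_of_integral_eq_one_of_integral_one_sub_mul_self {f : Ω → ℝ}
    (hf : MemLp f 2 μ) (horth : ∫ ω, (1 - f ω) * f ω ∂μ = 0) (hint : ∫ ω, f ω ∂μ = 1) :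
    f =ᵐ[μ] fun _ => 1 := by
  have hsq : ∫ ω, (1 - f ω) ^ 2 ∂μ = 0 := by
    rw [integral_one_sub_sq_of_integral_one_sub_mul_self hf horth, hint, sub_self]
  have hzero := (integral_eq_zero_iff_of_nonneg (fun ω => sq_nonneg (1 - f ω))
    ((memLp_const 1).sub hf).integrable_sq).mp hsq
  filter_upwards [hzero] with ω hω
  exact (sub_eq_zero.mp (pow_eq_zero_iff two_ne_zero |>.mp hω)).symm

end

theorem stmt4_general {Ω : Type*} [MeasurableSpace Ω] (μ : Measure Ω) [IsProbabilityMeasure μ]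
    (G : Submodule ℝ (Lp ℝ 2 μ))
    (hone : ∀ g : Lp ℝ 2 μ, g ∈ G → ¬ ((g : Ω → ℝ) =ᵐ[μ] fun _ => (1:ℝ)))
    (f : Lp ℝ 2 μ) (hfG : f ∈ G)
    (hproj : ∀ g : Lp ℝ 2 μ, g ∈ G → ∫ ω, (1 - f ω) * g ω ∂μ = 0) :
    (∫ ω, f ω ∂μ) ≠ 1 ∧
    (∫ ω, (1 - f ω) / (1 - ∫ ω', f ω' ∂μ) ∂μ) = 1 ∧
    (∀ g : Lp ℝ 2 μ, g ∈ G →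
      ∫ ω, ((1 - f ω) / (1 - ∫ ω', f ω' ∂μ)) * g ω ∂μ = 0) := by
  have hEf : (∫ ω, f ω ∂μ) ≠ 1 := fun hint =>
    hone f hfG (ae_eq_one_of_integral_eq_one_of_integral_one_sub_mul_self (Lp.memLp f)
      (hproj f hfG) hint)
  refine ⟨hEf, ?_, fun g hgG => ?_⟩
  · rw [integral_div, integral_sub (integrable_const 1) ((Lp.memLp f).integrable one_le_two)]
    simpa using div_self (sub_ne_zero.mpr hEf.symm)
  · simp_rw [div_mul_eq_mul_div]
    rw [integral_div, hproj g hgG, zero_div]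

/-- If the space of attainable gains `G ⊆ L²(P)` is a closed subspace not containing the
constant `1`, and `f` is the orthogonal projection of `1` onto `G` (i.e. `f ∈ G` and
`1 − f ⊥ G`), then `E[f] ≠ 1`, the density `D̃ = (1−f)/(1−E[f])` integrates to `1`, and
`E[D̃ g] = 0` for all `g ∈ G`; so `dP̃ = D̃ dP` is a signed martingale measure. -/
theorem stmt4 {Ω : Type*} [MeasurableSpace Ω] (μ : Measure Ω) [IsProbabilityMeasure μ]
    (G : Submodule ℝ (Lp ℝ 2 μ)) (hGclosed : IsClosed (G : Set (Lp ℝ 2 μ)))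
    (hone : ∀ g : Lp ℝ 2 μ, g ∈ G → ¬ ((g : Ω → ℝ) =ᵐ[μ] fun _ => (1:ℝ)))
    (f : Lp ℝ 2 μ) (hfG : f ∈ G)
    (hproj : ∀ g : Lp ℝ 2 μ, g ∈ G → ∫ ω, (1 - f ω) * g ω ∂μ = 0) :
    (∫ ω, f ω ∂μ) ≠ 1 ∧
    (∫ ω, (1 - f ω) / (1 - ∫ ω', f ω' ∂μ) ∂μ) = 1 ∧
    (∀ g : Lp ℝ 2 μ, g ∈ G →
      ∫ ω, ((1 - f ω) / (1 - ∫ ω', f ω' ∂μ)) * g ω ∂μ = 0) :=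
  stmt4_general μ G hone f hfG hproj
end

section
/- With notation as above (1 ∉ G_T(Θ), f the projection of 1 onto G_T(Θ), D̃ = (1−f)/(1−E[f])), for every D ∈ L²(P) with E[D]=1 and E[D G_T(v)] = 0 for all v ∈ Θ, one has E[D²] ≥ E[D̃²]. Hence D̃ is the variance-optimal signed martingale density. -/
open MeasureTheory
open scoped RealInnerProductSpace

/-!
With `u = 1 - f`, the constraints on `D` give `⟪D, u⟫ = E[D] - E[D f] = 1`, and `u ⊥ f` gives
`‖u‖² = E[u] = 1 - E[f]`. Cauchy–Schwarz then yields `E[D²] ≥ 1 / ‖u‖²`, while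
`E[D̃²] = ‖u‖² / (1 - E[f])² = 1 / ‖u‖²`.
-/

theorem inv_norm_sq_le_norm_sq_of_inner_eq_one {E : Type*} [NormedAddCommGroup E]
    [InnerProductSpace ℝ E] {x y : E} (h : ⟪x, y⟫ = 1) : (‖y‖ ^ 2)⁻¹ ≤ ‖x‖ ^ 2 := by
  have hxy : 1 ≤ ‖x‖ * ‖y‖ := h ▸ real_inner_le_norm x y
  have hy : 0 < ‖y‖ ^ 2 := by
    have : ‖y‖ ≠ 0 := fun hy => by norm_num [hy] at hxy
    positivity
  rw [inv_le_iff_one_le_mul₀ hy, ← mul_pow]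
  exact one_le_pow₀ hxy

namespace MeasureTheory

variable {Ω : Type*} [MeasurableSpace Ω] {μ : Measure Ω}

theorem MemLp.integral_mul_eq_inner_toLp {g h : Ω → ℝ} (hg : MemLp g 2 μ) (hh : MemLp h 2 μ) :
    ∫ ω, g ω * h ω ∂μ = ⟪hg.toLp g, hh.toLp h⟫ := by
  rw [L2.inner_def]
  refine integral_congr_ae ?_
  filter_upwards [hg.coeFn_toLp, hh.coeFn_toLp] with ω hgω hhω
  simp [hgω, hhω, mul_comm]

theorem MemLp.integral_sq_eq_norm_toLp_sq {g : Ω → ℝ} (hg : MemLp g 2 μ) :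
    ∫ ω, g ω ^ 2 ∂μ = ‖hg.toLp g‖ ^ 2 := by
  simp_rw [sq, hg.integral_mul_eq_inner_toLp hg, real_inner_self_eq_norm_mul_norm]

theorem inv_integral_sq_le_integral_sq_of_integral_mul_eq_one {g h : Ω → ℝ} (hg : MemLp g 2 μ)
    (hh : MemLp h 2 μ) (hgh : ∫ ω, g ω * h ω ∂μ = 1) :
    (∫ ω, h ω ^ 2 ∂μ)⁻¹ ≤ ∫ ω, g ω ^ 2 ∂μ := by
  rw [hg.integral_mul_eq_inner_toLp hh] at hgh
  rw [hg.integral_sq_eq_norm_toLp_sq, hh.integral_sq_eq_norm_toLp_sq]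
  exact inv_norm_sq_le_norm_sq_of_inner_eq_one hgh

theorem integral_mul_one_sub [IsFiniteMeasure μ] {g f : Ω → ℝ} (hg : MemLp g 2 μ)
    (hf : MemLp f 2 μ) :
    ∫ ω, g ω * (1 - f ω) ∂μ = ∫ ω, g ω ∂μ - ∫ ω, g ω * f ω ∂μ := by
  simp_rw [mul_one_sub]
  exact integral_sub (hg.integrable one_le_two) (hg.integrable_mul hf)

end MeasureTheory

theorem stmt5_general {Ω : Type*} [MeasurableSpace Ω] (μ : Measure Ω) [IsProbabilityMeasure μ]
    (G : Submodule ℝ (Lp ℝ 2 μ))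
    (f : Lp ℝ 2 μ) (hfG : f ∈ G)
    (hproj : ∀ g : Lp ℝ 2 μ, g ∈ G → ∫ ω, (1 - f ω) * g ω ∂μ = 0)
    (D : Ω → ℝ) (hD2 : MemLp D 2 μ)
    (hD1 : ∫ ω, D ω ∂μ = 1)
    (hDG : ∀ g : Lp ℝ 2 μ, g ∈ G → ∫ ω, D ω * g ω ∂μ = 0) :
    (∫ ω, (D ω)^2 ∂μ) ≥ ∫ ω, ((1 - f ω) / (1 - ∫ ω', f ω' ∂μ))^2 ∂μ := by
  set c := 1 - ∫ ω, f ω ∂μ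
  have hf2 : MemLp f 2 μ := Lp.memLp f
  have hu2 : MemLp (fun ω => 1 - f ω) 2 μ := (memLp_const 1).sub hf2
  have hDu : ∫ ω, D ω * (1 - f ω) ∂μ = 1 := by
    rw [integral_mul_one_sub hD2 hf2, hD1, hDG f hfG, sub_zero]
  have huu : ∫ ω, (1 - f ω) ^ 2 ∂μ = c := by
    simp_rw [sq]
    rw [integral_mul_one_sub hu2 hf2, hproj f hfG, sub_zero,
      integral_sub (integrable_const 1) (hf2.integrable one_le_two)]
    simp [c]
  calc ∫ ω, ((1 - f ω) / c) ^ 2 ∂μ = c⁻¹ := by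
        simp_rw [div_pow]
        rw [integral_div, huu, sq, div_self_mul_self']
    _ ≤ ∫ ω, D ω ^ 2 ∂μ := huu ▸ inv_integral_sq_le_integral_sq_of_integral_mul_eq_one hD2 hu2 hDu

/-- Variance-optimality of `D̃ = (1−f)/(1−E[f])`: among all square-integrable densities
`D` of signed `Θ`-martingale measures (`E[D] = 1` and `D ⊥ G` in `L²`), the density `D̃`
has minimal second moment: `E[D²] ≥ E[D̃²]`. -/
theorem stmt5 {Ω : Type*} [MeasurableSpace Ω] (μ : Measure Ω) [IsProbabilityMeasure μ]
    (G : Submodule ℝ (Lp ℝ 2 μ)) (hGclosed : IsClosed (G : Set (Lp ℝ 2 μ)))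
    (hone : ∀ g : Lp ℝ 2 μ, g ∈ G → ¬ ((g : Ω → ℝ) =ᵐ[μ] fun _ => (1:ℝ)))
    (f : Lp ℝ 2 μ) (hfG : f ∈ G)
    (hproj : ∀ g : Lp ℝ 2 μ, g ∈ G → ∫ ω, (1 - f ω) * g ω ∂μ = 0)
    (D : Ω → ℝ) (hD2 : MemLp D 2 μ)
    (hD1 : ∫ ω, D ω ∂μ = 1)
    (hDG : ∀ g : Lp ℝ 2 μ, g ∈ G → ∫ ω, D ω * g ω ∂μ = 0) :
    (∫ ω, (D ω)^2 ∂μ) ≥ ∫ ω, ((1 - f ω) / (1 - ∫ ω', f ω' ∂μ))^2 ∂μ :=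
  stmt5_general μ G f hfG hproj D hD2 hD1 hDG
end

section
/- Let H ∈ L²(Ω) with decomposition H = c + G + R where G ∈ G_T(Θ) and R is orthogonal in L²(P) to G_T(Θ) and E[R]=0. Then the expectation of H under the variance-optimal signed martingale measure P̃ (with density D̃ = (1−f)/(1−E[f])) equals c: E[D̃ H] = c. -/
/-!
Since `1 - f` is orthogonal to `G` and `R` is orthogonal to both `G` and the constants,
`E[(1 - f) H] = c E[1 - f] = c (1 - E[f])`. The normalisation is legitimate because
`E[(1 - f)²] = E[1 - f] - E[(1 - f) f] = 1 - E[f]`, so `E[f] = 1` would force `f = 1` a.e.,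
contradicting `1 ∉ G`.
-/

open MeasureTheory

section

variable {Ω : Type*} [MeasurableSpace Ω] {μ : Measure Ω}

lemma MeasureTheory.MemLp.integrable_mul_of_two {a b : Ω → ℝ} (ha : MemLp a 2 μ)
    (hb : MemLp b 2 μ) : Integrable (fun ω => a ω * b ω) μ :=
  ha.integrable_mul hb

lemma integral_one_sub_mul_self_eq [IsProbabilityMeasure μ] {f : Ω → ℝ} (hf : MemLp f 2 μ)
    (hff : ∫ ω, (1 - f ω) * f ω ∂μ = 0) :
    ∫ ω, (1 - f ω) * (1 - f ω) ∂μ = 1 - ∫ ω, f ω ∂μ := by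
  have hf1 : Integrable f μ := hf.integrable one_le_two
  have h1f : MemLp (fun ω => 1 - f ω) 2 μ := (memLp_const 1).sub hf
  calc ∫ ω, (1 - f ω) * (1 - f ω) ∂μ
      = ∫ ω, (1 - f ω) - (1 - f ω) * f ω ∂μ := by congr 1 with ω; ring
    _ = 1 - ∫ ω, f ω ∂μ := by
      rw [integral_sub (h1f.integrable one_le_two) (h1f.integrable_mul_of_two hf),
        integral_sub (integrable_const 1) hf1, hff]
      simp

lemma integral_ne_one_of_one_sub_orthogonal [IsProbabilityMeasure μ] {f : Ω → ℝ}
    (hf : MemLp f 2 μ) (hff : ∫ ω, (1 - f ω) * f ω ∂μ = 0) (hf_ne : ¬ f =ᵐ[μ] fun _ => 1) :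
    ∫ ω, f ω ∂μ ≠ 1 := by
  intro hEf
  have h1f : MemLp (fun ω => 1 - f ω) 2 μ := (memLp_const 1).sub hf
  have hsq : ∫ ω, (1 - f ω) * (1 - f ω) ∂μ = 0 := by
    rw [integral_one_sub_mul_self_eq hf hff, hEf, sub_self]
  have hzero : (fun ω => (1 - f ω) * (1 - f ω)) =ᵐ[μ] 0 :=
    (integral_eq_zero_iff_of_nonneg (fun ω => mul_self_nonneg _)
      (h1f.integrable_mul_of_two h1f)).mp hsq
  refine hf_ne ?_
  filter_upwards [hzero] with ω hω
  linarith [mul_self_eq_zero.mp hω]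

lemma integral_one_sub_mul_eq_zero_of_orthogonal [IsFiniteMeasure μ] {f R : Ω → ℝ}
    (hf : MemLp f 2 μ) (hR : MemLp R 2 μ) (hR0 : ∫ ω, R ω ∂μ = 0)
    (hRf : ∫ ω, R ω * f ω ∂μ = 0) :
    ∫ ω, (1 - f ω) * R ω ∂μ = 0 := by
  calc ∫ ω, (1 - f ω) * R ω ∂μ = ∫ ω, R ω - R ω * f ω ∂μ := by congr 1 with ω; ring
    _ = 0 := by
      rw [integral_sub (hR.integrable one_le_two) (hR.integrable_mul_of_two hf), hR0, hRf,
        sub_self]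

lemma integral_one_sub_mul_const_add [IsProbabilityMeasure μ] {f g R : Ω → ℝ} (c : ℝ)
    (hf : MemLp f 2 μ) (hg : MemLp g 2 μ) (hR : MemLp R 2 μ)
    (hfg : ∫ ω, (1 - f ω) * g ω ∂μ = 0) (hfR : ∫ ω, (1 - f ω) * R ω ∂μ = 0) :
    ∫ ω, (1 - f ω) * (c + g ω + R ω) ∂μ = c * (1 - ∫ ω, f ω ∂μ) := by
  have hf1 : Integrable f μ := hf.integrable one_le_two
  have h1f : MemLp (fun ω => 1 - f ω) 2 μ := (memLp_const 1).sub hf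
  have hc : Integrable (fun ω => c * (1 - f ω)) μ :=
    ((integrable_const 1).sub hf1).const_mul c
  calc ∫ ω, (1 - f ω) * (c + g ω + R ω) ∂μ
      = ∫ ω, c * (1 - f ω) + (1 - f ω) * g ω + (1 - f ω) * R ω ∂μ := by
        congr 1 with ω; ring
    _ = c * (1 - ∫ ω, f ω ∂μ) := by
      rw [integral_add (f := fun ω => c * (1 - f ω) + (1 - f ω) * g ω)
          (hc.add (h1f.integrable_mul_of_two hg)) (h1f.integrable_mul_of_two hR),
        integral_add hc (h1f.integrable_mul_of_two hg), hfg, hfR, integral_const_mul,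
        integral_sub (integrable_const 1) hf1]
      simp

end

theorem stmt6_general {Ω : Type*} [MeasurableSpace Ω] (μ : Measure Ω) [IsProbabilityMeasure μ]
    (G : Submodule ℝ (Lp ℝ 2 μ))
    (hone : ∀ g : Lp ℝ 2 μ, g ∈ G → ¬ ((g : Ω → ℝ) =ᵐ[μ] fun _ => (1:ℝ)))
    (f : Lp ℝ 2 μ) (hfG : f ∈ G)
    (hproj : ∀ g : Lp ℝ 2 μ, g ∈ G → ∫ ω, (1 - f ω) * g ω ∂μ = 0)
    (H : Ω → ℝ) (c : ℝ) (g : Lp ℝ 2 μ) (hg : g ∈ G)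
    (R : Ω → ℝ) (hR2 : MemLp R 2 μ)
    (hRG : ∀ g' : Lp ℝ 2 μ, g' ∈ G → ∫ ω, R ω * g' ω ∂μ = 0)
    (hR0 : ∫ ω, R ω ∂μ = 0)
    (hHdecomp : H =ᵐ[μ] fun ω => c + g ω + R ω) :
    ∫ ω, ((1 - f ω) / (1 - ∫ ω', f ω' ∂μ)) * H ω ∂μ = c := by
  have hEf : 1 - ∫ ω, f ω ∂μ ≠ 0 :=
    sub_ne_zero.mpr (integral_ne_one_of_one_sub_orthogonal (Lp.memLp f) (hproj f hfG)
      (hone f hfG)).symm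
  have hfH : ∫ ω, (1 - f ω) * H ω ∂μ = c * (1 - ∫ ω, f ω ∂μ) := by
    rw [integral_congr_ae (hHdecomp.mono fun ω hω => by rw [hω])]
    exact integral_one_sub_mul_const_add c (Lp.memLp f) (Lp.memLp g) hR2 (hproj g hg)
      (integral_one_sub_mul_eq_zero_of_orthogonal (Lp.memLp f) hR2 hR0 (hRG f hfG))
  calc ∫ ω, ((1 - f ω) / (1 - ∫ ω', f ω' ∂μ)) * H ω ∂μ
      = (1 - ∫ ω, f ω ∂μ)⁻¹ * ∫ ω, (1 - f ω) * H ω ∂μ := by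
        rw [← integral_const_mul]; congr 1 with ω; ring
    _ = c := by rw [hfH]; field_simp

/-- If `H = c + g + R` with `g ∈ G` (the attainable gains), `R ⊥ G` in `L²(P)` and
`E[R] = 0`, then the expectation of `H` under the variance-optimal signed martingale
measure, with density `D̃ = (1−f)/(1−E[f])`, equals `c`: `E[D̃ H] = c`. -/
theorem stmt6 {Ω : Type*} [MeasurableSpace Ω] (μ : Measure Ω) [IsProbabilityMeasure μ]
    (G : Submodule ℝ (Lp ℝ 2 μ)) (hGclosed : IsClosed (G : Set (Lp ℝ 2 μ)))
    (hone : ∀ g : Lp ℝ 2 μ, g ∈ G → ¬ ((g : Ω → ℝ) =ᵐ[μ] fun _ => (1:ℝ)))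
    (f : Lp ℝ 2 μ) (hfG : f ∈ G)
    (hproj : ∀ g : Lp ℝ 2 μ, g ∈ G → ∫ ω, (1 - f ω) * g ω ∂μ = 0)
    (H : Ω → ℝ) (hH : MemLp H 2 μ) (c : ℝ) (g : Lp ℝ 2 μ) (hg : g ∈ G)
    (R : Ω → ℝ) (hR2 : MemLp R 2 μ)
    (hRG : ∀ g' : Lp ℝ 2 μ, g' ∈ G → ∫ ω, R ω * g' ω ∂μ = 0)
    (hR0 : ∫ ω, R ω ∂μ = 0)
    (hHdecomp : H =ᵐ[μ] fun ω => c + g ω + R ω) :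
    ∫ ω, ((1 - f ω) / (1 - ∫ ω', f ω' ∂μ)) * H ω ∂μ = c :=
  stmt6_general μ G hone f hfG hproj H c g hg R hR2 hRG hR0 hHdecomp
end
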